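/- Let A, B be contractions from H1 to H2 with I - A*B = D_B Y D_B for a bounded operator Y, and let x ∈ H1 satisfy D_B(2Re(Y) - I)D_B x = 0 and x ∈ closure(Ran D_B). Then x = 0. -/

import Mathlib

/-!
Expanding `D_B (Y + Y* - I) D_B` with `D_B Y D_B = I - A*B` and `D_B² = I - B*B` gives
`D_A² + (A - B)*(A - B)`, a sum of two positive operators. If it annihilates `x`, both quadratic
forms vanish at `x`, so `Ax = Bx` and `‖Ax‖ = ‖x‖`; hence `‖Bx‖ = ‖x‖` and `D_B x = 0`.
Since `ker D_B` is orthogonal to the range of the self-adjoint `D_B`, an `x` in the closure of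
that range must vanish.
-/

open ContinuousLinearMap Complex

noncomputable section

variable {H1 H2 : Type*}
  [NormedAddCommGroup H1] [InnerProductSpace ℂ H1] [CompleteSpace H1]
  [NormedAddCommGroup H2] [InnerProductSpace ℂ H2] [CompleteSpace H2]

/-- Real part of an operator. -/
def reOp {H : Type*} [NormedAddCommGroup H] [InnerProductSpace ℂ H] [CompleteSpace H]
    (T : H →L[ℂ] H) : H →L[ℂ] H := (2 : ℂ)⁻¹ • (T + adjoint T)

/-- Imaginary part of an operator. -/
def imOp {H : Type*} [NormedAddCommGroup H] [InnerProductSpace ℂ H] [CompleteSpace H]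
    (T : H →L[ℂ] H) : H →L[ℂ] H := (2 * Complex.I : ℂ)⁻¹ • (T - adjoint T)

/-- The defect operator `D_C = (I - C*C)^{1/2}` (positive square root). -/
def defect {Ha Hb : Type*} [NormedAddCommGroup Ha] [InnerProductSpace ℂ Ha] [CompleteSpace Ha]
    [NormedAddCommGroup Hb] [InnerProductSpace ℂ Hb] [CompleteSpace Hb]
    (C : Ha →L[ℂ] Hb) : Ha →L[ℂ] Ha := CFC.sqrt (1 - adjoint C ∘L C)

section InnerProduct

variable {𝕜 E F : Type*} [RCLike 𝕜]
  [NormedAddCommGroup E] [InnerProductSpace 𝕜 E] [CompleteSpace E]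
  [NormedAddCommGroup F] [InnerProductSpace 𝕜 F] [CompleteSpace F]

theorem ContinuousLinearMap.re_inner_one_sub_adjoint_comp_self_apply (C : E →L[𝕜] F) (x : E) :
    RCLike.re (inner 𝕜 x ((1 - adjoint C ∘L C) x)) = ‖x‖ ^ 2 - ‖C x‖ ^ 2 := by
  rw [sub_apply, one_apply_eq_self, inner_sub_right, map_sub, inner_self_eq_norm_sq (𝕜 := 𝕜),
    apply_norm_sq_eq_inner_adjoint_right]

theorem ContinuousLinearMap.eq_zero_of_apply_eq_zero_of_mem_closure_range_adjoint
    (T : E →L[𝕜] F) {x : E} (hx : T x = 0) (hxr : x ∈ closure (Set.range (adjoint T))) :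
    x = 0 := by
  have hx_perp : x ∈ T.kerᗮ := by
    rw [orthogonal_ker, ← SetLike.mem_coe, Submodule.topologicalClosure_coe]
    exact hxr
  exact Submodule.disjoint_def.mp (Submodule.orthogonal_disjoint _) x hx hx_perp

theorem norm_apply_sq_of_comp_self_eq_one_sub {D : E →L[𝕜] E} (hD : IsSelfAdjoint D)
    {B : E →L[𝕜] F} (hDsq : D ∘L D = 1 - adjoint B ∘L B) (x : E) :
    ‖D x‖ ^ 2 = ‖x‖ ^ 2 - ‖B x‖ ^ 2 := by
  rw [apply_norm_sq_eq_inner_adjoint_right, hD.adjoint_eq, hDsq,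
    re_inner_one_sub_adjoint_comp_self_apply]

theorem norm_apply_eq_of_one_sub_adjoint_comp_self_add_apply_eq_zero {A B : E →L[𝕜] F}
    (hA : ‖A‖ ≤ 1) {x : E} (hx : ((1 - adjoint A ∘L A) + adjoint (A - B) ∘L (A - B)) x = 0) :
    ‖B x‖ = ‖x‖ := by
  have hsum : (‖x‖ ^ 2 - ‖A x‖ ^ 2) + ‖(A - B) x‖ ^ 2 = 0 := by
    have := congrArg (fun y => RCLike.re (inner 𝕜 x y)) hx
    simpa only [add_apply, inner_add_right, map_add, re_inner_one_sub_adjoint_comp_self_apply,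
      ← apply_norm_sq_eq_inner_adjoint_right, inner_zero_right, map_zero] using this
  have hAx : ‖A x‖ ≤ ‖x‖ := by simpa using A.le_of_opNorm_le hA x
  have hAx_eq : ‖A x‖ = ‖x‖ := by nlinarith [norm_nonneg (A x), sq_nonneg ‖(A - B) x‖]
  have hAB : (A - B) x = 0 := by
    rw [← norm_eq_zero]; nlinarith [norm_nonneg (A x), sq_nonneg ‖(A - B) x‖]
  rw [sub_apply, sub_eq_zero] at hAB
  rw [← hAB, hAx_eq]

end InnerProduct

theorem two_smul_reOp {H : Type*} [NormedAddCommGroup H] [InnerProductSpace ℂ H]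
    [CompleteSpace H] (T : H →L[ℂ] H) : (2 : ℂ) • reOp T = T + adjoint T := by
  simp [reOp, smul_smul]

theorem comp_two_smul_reOp_sub_one_comp_eq {A B : H1 →L[ℂ] H2} {D Y : H1 →L[ℂ] H1}
    (hD : IsSelfAdjoint D) (hDsq : D ∘L D = 1 - adjoint B ∘L B)
    (hY : 1 - adjoint A ∘L B = D ∘L Y ∘L D) :
    D ∘L ((2 : ℂ) • reOp Y - 1) ∘L D = (1 - adjoint A ∘L A) + adjoint (A - B) ∘L (A - B) := by
  have hY_adj : 1 - adjoint B ∘L A = D ∘L adjoint Y ∘L D := by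
    simpa [adjoint_comp, hD.adjoint_eq, comp_assoc, adjoint_one] using congrArg adjoint hY
  calc D ∘L ((2 : ℂ) • reOp Y - 1) ∘L D
      = D ∘L Y ∘L D + D ∘L adjoint Y ∘L D - D ∘L D := by
        simp [two_smul_reOp, comp_add, add_comp, comp_sub, sub_comp, one_def]
    _ = (1 - adjoint A ∘L B) + (1 - adjoint B ∘L A) - (1 - adjoint B ∘L B) := by
        rw [hY, hY_adj, hDsq]
    _ = (1 - adjoint A ∘L A) + adjoint (A - B) ∘L (A - B) := by
        simp only [map_sub, sub_comp, comp_sub]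
        abel

theorem stmt5_general (A B : H1 →L[ℂ] H2) (hA : ‖A‖ ≤ 1)
    (DB : H1 →L[ℂ] H1) (hDBpos : 0 ≤ DB) (hDBsq : DB ∘L DB = 1 - adjoint B ∘L B)
    (Y : H1 →L[ℂ] H1) (hY : 1 - adjoint A ∘L B = DB ∘L Y ∘L DB)
    (x : H1) (hx : (DB ∘L ((2 : ℂ) • reOp Y - 1) ∘L DB) x = 0)
    (hxr : x ∈ closure (Set.range DB)) : x = 0 := by
  have hDB : IsSelfAdjoint DB := hDBpos.isSelfAdjoint
  rw [comp_two_smul_reOp_sub_one_comp_eq hDB hDBsq hY] at hx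
  have hBx : ‖B x‖ = ‖x‖ := norm_apply_eq_of_one_sub_adjoint_comp_self_add_apply_eq_zero hA hx
  have hDBx : DB x = 0 := by
    rw [← norm_eq_zero, ← sq_eq_zero_iff, norm_apply_sq_of_comp_self_eq_one_sub hDB hDBsq, hBx,
      sub_self]
  rw [← hDB.adjoint_eq] at hxr
  exact DB.eq_zero_of_apply_eq_zero_of_mem_closure_range_adjoint hDBx hxr

theorem stmt5 (A B : H1 →L[ℂ] H2) (hA : ‖A‖ ≤ 1) (hB : ‖B‖ ≤ 1)
    (DB : H1 →L[ℂ] H1) (hDBpos : 0 ≤ DB) (hDBsq : DB ∘L DB = 1 - adjoint B ∘L B)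
    (Y : H1 →L[ℂ] H1) (hY : 1 - adjoint A ∘L B = DB ∘L Y ∘L DB)
    (x : H1) (hx : (DB ∘L ((2 : ℂ) • reOp Y - 1) ∘L DB) x = 0)
    (hxr : x ∈ closure (Set.range DB)) : x = 0 :=
  stmt5_general A B hA DB hDBpos hDBsq Y hY x hx hxr
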